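/- arXiv:2604.26570 — 5 statements merged into one kernel-verified Lean document; each statement's English description precedes it below -/
import Mathlib

section
/- Let Γ be a good pointclass such that every set X ⊆ [ℕ]^ω belonging to Γ has the Ramsey property. Then there is no Dedekind-infinite maximal almost disjoint (MAD) family belonging to Γ. -/
open Set

open Classical in
/-- The characteristic function of a set, viewed as a point of the Cantor space `α → Bool`. -/
noncomputable def chi {α : Type} (s : Set α) : α → Bool :=
  fun a => if a ∈ s then true else false

/-- A *good pointclass*: a collection of subsets of Polish spaces containing all clopen
sets and closed under countable intersections, countable unions, finite products,
continuous images, and continuous preimages. -/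
structure GoodPointclass : Type 1 where
  mem : ∀ (X : Type) [TopologicalSpace X], Set (Set X)
  clopen_mem : ∀ (X : Type) [TopologicalSpace X] [PolishSpace X] (s : Set X),
    IsClopen s → s ∈ mem X
  iInter_mem : ∀ (X : Type) [TopologicalSpace X] [PolishSpace X] (s : ℕ → Set X),
    (∀ n, s n ∈ mem X) → (⋂ n, s n) ∈ mem X
  iUnion_mem : ∀ (X : Type) [TopologicalSpace X] [PolishSpace X] (s : ℕ → Set X),
    (∀ n, s n ∈ mem X) → (⋃ n, s n) ∈ mem X
  prod_mem : ∀ (X Y : Type) [TopologicalSpace X] [PolishSpace X]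
    [TopologicalSpace Y] [PolishSpace Y] (s : Set X) (t : Set Y),
    s ∈ mem X → t ∈ mem Y → s ×ˢ t ∈ mem (X × Y)
  image_mem : ∀ (X Y : Type) [TopologicalSpace X] [PolishSpace X]
    [TopologicalSpace Y] [PolishSpace Y] (f : X → Y) (s : Set X),
    Continuous f → s ∈ mem X → f '' s ∈ mem Y
  preimage_mem : ∀ (X Y : Type) [TopologicalSpace X] [PolishSpace X]
    [TopologicalSpace Y] [PolishSpace Y] (f : X → Y) (t : Set Y),
    Continuous f → t ∈ mem Y → f ⁻¹' t ∈ mem X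

/-- A set `X ⊆ [ℕ]^ω` has the Ramsey property. -/
def RamseyProp (X : Set (Set ℕ)) : Prop :=
  ∃ H : Set ℕ, H.Infinite ∧
    ((∀ y : Set ℕ, y.Infinite → y ⊆ H → y ∈ X) ∨
     (∀ y : Set ℕ, y.Infinite → y ⊆ H → y ∉ X))

/-- `𝒜 ⊆ [ℕ]^ω` is a maximal almost disjoint family. -/
def IsMadFamily (𝒜 : Set (Set ℕ)) : Prop :=
  (∀ A ∈ 𝒜, A.Infinite) ∧
  (∀ A ∈ 𝒜, ∀ B ∈ 𝒜, A ≠ B → (A ∩ B).Finite) ∧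
  (∀ x : Set ℕ, x.Infinite → ∃ A ∈ 𝒜, (x ∩ A).Infinite)


/-!
Let `f n` be distinct members of `𝒜`. The pieces `disjointed f n` are infinite, and
`blockCode f a c`, the `c`-th element of the `a`-th piece, is an injective code for pairs.
Let `X` be the set of `x` for which a single `A ∈ 𝒜` contains infinitely many codes of the pairs
`(x₂ᵢ, x₂ᵢ₊₁)` and infinitely many codes of the pairs `(x₂ᵢ₊₁, x₂ᵢ₊₂)` of consecutive elements.
It is a projection of a `Π⁰₂` condition on `(x, A)`, hence in `Γ` (parametrizing increasing
enumerations continuously by their gaps, in Baire space), but no infinite `H` is homogeneous.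
By maximality some `A` contains infinitely many codes of consecutive pairs from `H`; putting a
filler after each of them shifts the parity, so some `x ⊆ H` is in `X`. This `A` is not an `f m`,
so it contains only finitely many codes with a given first coordinate; spacing its pairs out, the
pairs in between are never coded in `A`, while any other member of `𝒜` meets `A` finitely, so some
`x ⊆ H` is not in `X`.
-/

open Function

instance : PolishSpace Bool := {}

theorem chi_eq_true {α : Type} (s : Set α) (a : α) : chi s a = true ↔ a ∈ s := by
  simp [chi]

namespace GoodPointclass

variable (Γ : GoodPointclass) {X : Type} [TopologicalSpace X] [PolishSpace X]

theorem inter_mem {U V : Set X} (hU : U ∈ Γ.mem X) (hV : V ∈ Γ.mem X) : U ∩ V ∈ Γ.mem X :=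
  Γ.preimage_mem X (X × X) (fun x => (x, x)) (U ×ˢ V) (continuous_id.prodMk continuous_id)
    (Γ.prod_mem X X U V hU hV)

theorem setOf_infinite_mem {C : ℕ → Set X} (hC : ∀ i, IsClopen (C i)) :
    {z | {i | z ∈ C i}.Infinite} ∈ Γ.mem X := by
  have hC' : {z | {i | z ∈ C i}.Infinite} = ⋂ N, ⋃ i, C (N + 1 + i) := by
    ext z
    simp only [mem_ofPred_eq, mem_iInter, mem_iUnion, Set.infinite_iff_exists_gt]
    refine forall_congr' fun N =>
      ⟨fun ⟨b, hb, hNb⟩ => ⟨b - (N + 1), ?_⟩, fun ⟨i, hi⟩ => ⟨_, hi, by omega⟩⟩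
    rwa [Nat.add_sub_cancel' hNb]
  rw [hC']
  exact Γ.iInter_mem X _ fun N => Γ.iUnion_mem X _ fun i => Γ.clopen_mem X _ (hC _)

end GoodPointclass

theorem isClopen_setOf_apply_eq_true {Z : Type} [TopologicalSpace Z] {φ : Z → ℕ}
    (hφ : Continuous φ) : IsClopen {p : Z × (ℕ → Bool) | p.2 (φ p.1) = true} := by
  have heval : Continuous fun q : (ℕ → Bool) × ℕ => q.1 q.2 :=
    continuous_prod_of_discrete_right.2 fun n => continuous_apply n
  exact (isClopen_discrete {true}).preimage
    (heval.comp (continuous_snd.prodMk (hφ.comp continuous_fst)))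

def ofGaps (d : ℕ → ℕ) : ℕ → ℕ
  | 0 => d 0
  | k + 1 => ofGaps d k + d (k + 1) + 1

theorem strictMono_ofGaps (d : ℕ → ℕ) : StrictMono (ofGaps d) :=
  strictMono_nat_of_lt_succ fun k => by simp only [ofGaps]; omega

theorem exists_ofGaps_eq {u : ℕ → ℕ} (hu : StrictMono u) : ∃ d, ofGaps d = u := by
  refine ⟨fun | 0 => u 0 | k + 1 => u (k + 1) - u k - 1, funext fun k => ?_⟩
  induction k with
  | zero => rfl
  | succ k ih =>
    have := hu (lt_add_one k)
    simp only [ofGaps, ih]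
    omega

theorem continuous_ofGaps_apply (k : ℕ) : Continuous fun d => ofGaps d k := by
  induction k with
  | zero => exact continuous_apply 0
  | succ k ih => exact (ih.add (continuous_apply _)).add continuous_const

theorem continuous_chi_range {Z : Type} [TopologicalSpace Z] {F : Z → ℕ → ℕ}
    (hF : ∀ k, Continuous fun z => F z k) (hmono : ∀ z, StrictMono (F z)) :
    Continuous fun z => chi (range (F z)) := by
  refine continuous_pi fun n => ?_
  have hind : (fun z => chi (range (F z)) n) = {z | n ∈ range (F z)}.boolIndicator := by
    ext z
    simp [chi, Set.boolIndicator]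
  -- `F z k ≥ k`, so only the first `n + 1` terms can hit `n`
  have hfin : {z | n ∈ range (F z)} = ⋃ k ∈ Finset.range (n + 1), (fun z => F z k) ⁻¹' {n} := by
    ext z
    simp only [mem_ofPred_eq, mem_range, Finset.mem_range, mem_iUnion, mem_preimage,
      mem_singleton_iff, exists_prop]
    exact ⟨fun ⟨k, hk⟩ => ⟨k, by have := (hmono z).le_apply (x := k); omega, hk⟩,
      fun ⟨k, _, hk⟩ => ⟨k, hk⟩⟩
  rw [hind, continuous_boolIndicator_iff_isClopen, hfin]
  exact isClopen_biUnion_finset fun k _ => (isClopen_discrete {n}).preimage (hF k)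

theorem strictMono_concat_blocks {h j : ℕ → ℕ} {L : ℕ} (hh : StrictMono h)
    (hj : ∀ t, j t + L ≤ j (t + 1)) : StrictMono fun k => h (j (k / L) + k % L) := by
  rcases Nat.eq_zero_or_pos L with rfl | hL
  · simp only [Nat.div_zero, Nat.mod_zero]
    exact fun a b hab => hh (by omega)
  have hdm : ∀ q r, r < L → (L * q + r) / L = q ∧ (L * q + r) % L = r := fun q r hr =>
    ⟨by rw [Nat.add_comm, Nat.add_mul_div_left _ _ hL, Nat.div_eq_of_lt hr, zero_add],
      by simp [Nat.mod_eq_of_lt hr]⟩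
  refine hh.comp (strictMono_nat_of_lt_succ fun k => ?_)
  obtain ⟨q, r, hr, rfl⟩ : ∃ q r, r < L ∧ L * q + r = k :=
    ⟨k / L, k % L, Nat.mod_lt k hL, Nat.div_add_mod k L⟩
  rw [(hdm q r hr).1, (hdm q r hr).2]
  rcases (Nat.succ_le_of_lt hr).lt_or_eq with hr' | hr'
  · rw [add_assoc, (hdm q (r + 1) hr').1, (hdm q (r + 1) hr').2]
    omega
  · rw [show L * q + r + 1 = L * (q + 1) + 0 by rw [mul_add]; omega, (hdm _ 0 hL).1,
      (hdm _ 0 hL).2]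
    have := hj q
    omega

def bothParitiesHit (κ : ℕ → ℕ → ℕ) (𝒜 : Set (Set ℕ)) : Set (Set ℕ) :=
  {x | ∃ u, StrictMono u ∧ range u = x ∧ ∃ A ∈ 𝒜,
    {i | κ (u (2 * i)) (u (2 * i + 1)) ∈ A}.Infinite ∧
    {i | κ (u (2 * i + 1)) (u (2 * i + 2)) ∈ A}.Infinite}

section BothParitiesHit

variable {κ : ℕ → ℕ → ℕ} {𝒜 : Set (Set ℕ)}

theorem infinite_of_mem_bothParitiesHit {x : Set ℕ} (hx : x ∈ bothParitiesHit κ 𝒜) :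
    x.Infinite := by
  obtain ⟨u, hu, rfl, -⟩ := hx
  exact infinite_range_of_injective hu.injective

theorem chi_image_bothParitiesHit_mem (Γ : GoodPointclass)
    (h𝒜 : chi '' 𝒜 ∈ Γ.mem (ℕ → Bool)) : chi '' bothParitiesHit κ 𝒜 ∈ Γ.mem (ℕ → Bool) := by
  have hcode : ∀ a b, Continuous fun d => κ (ofGaps d a) (ofGaps d b) := fun a b =>
    (continuous_of_discreteTopology (f := uncurry κ)).comp
      ((continuous_ofGaps_apply a).prodMk (continuous_ofGaps_apply b))
  set T : Set ((ℕ → ℕ) × (ℕ → Bool)) := Prod.snd ⁻¹' (chi '' 𝒜) ∩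
    ({p | {i | p.2 (κ (ofGaps p.1 (2 * i)) (ofGaps p.1 (2 * i + 1))) = true}.Infinite} ∩
      {p | {i | p.2 (κ (ofGaps p.1 (2 * i + 1)) (ofGaps p.1 (2 * i + 2))) = true}.Infinite})
  have hT : T ∈ Γ.mem _ :=
    Γ.inter_mem (Γ.preimage_mem _ _ _ _ continuous_snd h𝒜) <| Γ.inter_mem
      (Γ.setOf_infinite_mem fun i => isClopen_setOf_apply_eq_true (hcode _ _))
      (Γ.setOf_infinite_mem fun i => isClopen_setOf_apply_eq_true (hcode _ _))
  -- a point of `T` is a gap sequence `d` together with the code `chi A` of a witness `A ∈ 𝒜`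
  have hX :
      chi '' bothParitiesHit κ 𝒜 = (fun d => chi (range (ofGaps d))) '' (Prod.fst '' T) := by
    ext y
    constructor
    · rintro ⟨x, ⟨u, hu, rfl, A, hA, hE, hO⟩, rfl⟩
      obtain ⟨d, rfl⟩ := exists_ofGaps_eq hu
      exact ⟨d, ⟨(d, chi A), ⟨⟨A, hA, rfl⟩,
        by simpa only [mem_ofPred_eq, chi_eq_true] using hE,
        by simpa only [mem_ofPred_eq, chi_eq_true] using hO⟩, rfl⟩, rfl⟩
    · rintro ⟨_, ⟨⟨d, _⟩, ⟨⟨A, hA, rfl⟩, hE, hO⟩, rfl⟩, rfl⟩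
      exact ⟨_, ⟨ofGaps d, strictMono_ofGaps d, rfl, A, hA,
        by simpa only [mem_ofPred_eq, chi_eq_true] using hE,
        by simpa only [mem_ofPred_eq, chi_eq_true] using hO⟩, rfl⟩
  rw [hX]
  exact Γ.image_mem _ _ _ _ (continuous_chi_range continuous_ofGaps_apply strictMono_ofGaps)
    (Γ.image_mem _ _ _ _ continuous_fst hT)

theorem exists_mem_infinite_preimage
    (hmax : ∀ x : Set ℕ, x.Infinite → ∃ A ∈ 𝒜, (x ∩ A).Infinite) {g : ℕ → ℕ} (hg : Injective g) :
    ∃ A ∈ 𝒜, (g ⁻¹' A).Infinite := by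
  obtain ⟨A, hA, hinf⟩ := hmax (range g) (infinite_range_of_injective hg)
  exact ⟨A, hA, fun hfin => hinf (image_preimage_eq_range_inter ▸ hfin.image g)⟩

theorem exists_subset_range_mem_bothParitiesHit
    (hmax : ∀ x : Set ℕ, x.Infinite → ∃ A ∈ 𝒜, (x ∩ A).Infinite) (hκ : Injective2 κ)
    {h : ℕ → ℕ} (hh : StrictMono h) : ∃ x ⊆ range h, x ∈ bothParitiesHit κ 𝒜 := by
  obtain ⟨A, hA, hS⟩ := exists_mem_infinite_preimage hmax
    (g := fun j => κ (h (3 * j)) (h (3 * j + 1))) fun j j' e => by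
      have := hh.injective (hκ e).1
      omega
  set S := (fun j => κ (h (3 * j)) (h (3 * j + 1))) ⁻¹' A
  have hs : StrictMono (Nat.nth (· ∈ S)) := Nat.nth_strictMono hS
  set u : ℕ → ℕ := fun k => h (3 * Nat.nth (· ∈ S) (k / 3) + k % 3) with hu_def
  have hu : StrictMono u :=
    strictMono_concat_blocks (j := fun t => 3 * Nat.nth (· ∈ S) t) hh fun t => by
      have := hs (lt_add_one t)
      omega
  -- the blocks `u (3t), u (3t+1), u (3t+2)` start at both parities, each with a pair coded in `A`
  have hpair : ∀ t k k', k = 3 * t → k' = 3 * t + 1 → κ (u k) (u k') ∈ A := by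
    rintro t _ _ rfl rfl
    simp only [hu_def, show 3 * t / 3 = t by omega, show (3 * t + 1) / 3 = t by omega,
      show 3 * t % 3 = 0 by omega, show (3 * t + 1) % 3 = 1 by omega, add_zero]
    exact Nat.nth_mem_of_infinite hS t
  refine ⟨range u, fun _ ⟨k, hk⟩ => ⟨_, hk⟩, u, hu, rfl, A, hA, ?_, ?_⟩
  · refine (infinite_range_of_injective (fun m m' (e : 3 * m = 3 * m') => by omega :
      Injective (3 * ·))).mono ?_
    rintro _ ⟨m, rfl⟩
    exact hpair (2 * m) _ _ (by ring) (by ring)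
  · refine (infinite_range_of_injective (fun m m' (e : 3 * m + 1 = 3 * m' + 1) => by omega :
      Injective fun m => 3 * m + 1)).mono ?_
    rintro _ ⟨m, rfl⟩
    exact hpair (2 * m + 1) _ _ (by ring) (by ring)

theorem exists_subset_range_notMem_bothParitiesHit
    (had : ∀ A ∈ 𝒜, ∀ B ∈ 𝒜, A ≠ B → (A ∩ B).Finite) (hκ : Injective2 κ)
    {h : ℕ → ℕ} (hh : StrictMono h) {A₁ : Set ℕ} (hA₁ : A₁ ∈ 𝒜)
    (hS : {j | κ (h j) (h (j + 1)) ∈ A₁}.Infinite) (hsec : ∀ a, {c | κ a c ∈ A₁}.Finite) :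
    ∃ x ⊆ range h, x.Infinite ∧ x ∉ bothParitiesHit κ 𝒜 := by
  have hnext : ∀ j, ∃ j', κ (h j') (h (j' + 1)) ∈ A₁ ∧ j + 1 < j' ∧ κ (h (j + 1)) (h j') ∉ A₁ := by
    intro j
    have hfin : (h ⁻¹' {c | κ (h (j + 1)) c ∈ A₁}).Finite := (hsec _).preimage hh.injective.injOn
    obtain ⟨j', ⟨hj'S, hj'⟩, hgt⟩ := (hS.sdiff hfin).exists_gt (j + 1)
    exact ⟨j', hj'S, hgt, hj'⟩
  choose next hnext_mem hnext_gt hnext_notMem using hnext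
  obtain ⟨j₀, hj₀⟩ := hS.nonempty
  set j : ℕ → ℕ := fun i => next^[i] j₀
  have hj_succ : ∀ i, j (i + 1) = next (j i) := fun i => iterate_succ_apply' next i j₀
  have hj_mem : ∀ i, κ (h (j i)) (h (j i + 1)) ∈ A₁ := by
    rintro (_ | i)
    · exact hj₀
    · rw [hj_succ]
      exact hnext_mem _
  set u : ℕ → ℕ := fun k => h (j (k / 2) + k % 2) with hu_def
  have hu : StrictMono u := strictMono_concat_blocks (L := 2) hh fun i => by
    have := hnext_gt (j i)
    rw [hj_succ]
    omega
  have hu_even : ∀ i, u (2 * i) = h (j i) := fun i => by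
    simp only [hu_def, show 2 * i / 2 = i by omega, show 2 * i % 2 = 0 by omega, add_zero]
  have hu_odd : ∀ i, u (2 * i + 1) = h (j i + 1) := fun i => by
    simp only [hu_def, show (2 * i + 1) / 2 = i by omega, show (2 * i + 1) % 2 = 1 by omega]
  refine ⟨range u, fun _ ⟨k, hk⟩ => ⟨_, hk⟩, infinite_range_of_injective hu.injective, ?_⟩
  rintro ⟨u', hu', hrange, A, hA, hE, hO⟩
  obtain rfl : u' = u := (hu'.range_inj hu).1 hrange
  -- the even pairs are all coded in `A₁`, so `A` can only catch infinitely many of them if `A = A₁`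
  obtain rfl : A = A₁ := by
    by_contra hne
    have hinj : Injective fun i => κ (u (2 * i)) (u (2 * i + 1)) := fun i i' e => by
      have := hu.injective (hκ e).1
      omega
    refine hE (((had A hA A₁ hA₁ hne).preimage hinj.injOn).subset fun i hi => ⟨hi, ?_⟩)
    simpa only [mem_preimage, hu_even, hu_odd] using hj_mem i
  refine hO (finite_empty.subset fun i hi => hnext_notMem (j i) ?_)
  rwa [mem_ofPred_eq, hu_odd, show 2 * i + 2 = 2 * (i + 1) by ring, hu_even, hj_succ] at hi

end BothParitiesHit

section Blocks

variable {f : ℕ → Set ℕ}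

theorem disjointed_infinite (hinf : ∀ n, (f n).Infinite)
    (had : Pairwise fun m n => (f m ∩ f n).Finite) (n : ℕ) : (disjointed f n).Infinite := by
  rw [disjointed_apply, Finset.sup_set_eq_biUnion, ← sdiff_self_inter, inter_iUnion₂]
  exact (hinf n).sdiff ((Finset.Iio n).finite_toSet.biUnion fun m hm =>
    had (ne_of_gt (Finset.mem_Iio.1 hm)))

theorem notMem_of_mem_disjointed {m n v : ℕ} (hmn : m < n) (hv : v ∈ disjointed f n) :
    v ∉ f m := by
  rw [disjointed_eq_inter_compl] at hv
  exact mem_iInter₂.1 hv.2 m hmn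

variable (f) in
noncomputable def blockCode (a c : ℕ) : ℕ := Nat.nth (· ∈ disjointed f a) c

variable (hblock : ∀ n, (disjointed f n).Infinite)
include hblock

theorem blockCode_mem_disjointed (a c : ℕ) : blockCode f a c ∈ disjointed f a :=
  Nat.nth_mem_of_infinite (hblock a) c

theorem strictMono_blockCode (a : ℕ) : StrictMono (blockCode f a) :=
  Nat.nth_strictMono (hblock a)

theorem injective2_blockCode : Injective2 (blockCode f) := by
  intro a a' c c' e
  obtain rfl : a = a' := by
    by_contra hne
    exact (disjoint_disjointed f hne).ne_of_mem (blockCode_mem_disjointed hblock a c)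
      (blockCode_mem_disjointed hblock a' c') e
  exact ⟨rfl, (strictMono_blockCode hblock a).injective e⟩

theorem exists_mem_infinite_blockCode {𝒜 : Set (Set ℕ)}
    (hmax : ∀ x : Set ℕ, x.Infinite → ∃ A ∈ 𝒜, (x ∩ A).Infinite)
    (had : ∀ A ∈ 𝒜, ∀ B ∈ 𝒜, A ≠ B → (A ∩ B).Finite) (hf𝒜 : ∀ n, f n ∈ 𝒜)
    {h : ℕ → ℕ} (hh : StrictMono h) :
    ∃ A ∈ 𝒜, {j | blockCode f (h j) (h (j + 1)) ∈ A}.Infinite ∧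
      ∀ a, {c | blockCode f a c ∈ A}.Finite := by
  obtain ⟨A, hA, hS⟩ := exists_mem_infinite_preimage hmax
    (g := fun j => blockCode f (h j) (h (j + 1))) fun j j' e =>
      hh.injective (injective2_blockCode hblock e).1
  refine ⟨A, hA, hS, fun a => ?_⟩
  -- `f a` contains no code `blockCode f a' c` with `a < a'`, but `h j → ∞`
  have hne : A ≠ f a := by
    rintro rfl
    refine hS ((finite_Iic a).subset fun j hj => ?_)
    by_contra hja
    exact notMem_of_mem_disjointed ((not_le.1 hja).trans_le hh.le_apply)
      (blockCode_mem_disjointed hblock _ _) hj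
  exact ((had A hA _ (hf𝒜 a) hne).preimage (strictMono_blockCode hblock a).injective.injOn).subset
    fun c hc => ⟨hc, disjointed_subset f a (blockCode_mem_disjointed hblock a c)⟩

end Blocks

theorem no_dedekind_infinite_mad_family_in_good_pointclass (Γ : GoodPointclass)
    (hRamsey : ∀ X : Set (Set ℕ), (∀ x ∈ X, x.Infinite) →
      chi '' X ∈ Γ.mem (ℕ → Bool) → RamseyProp X) :
    ¬ ∃ 𝒜 : Set (Set ℕ), IsMadFamily 𝒜 ∧
      (∃ f : ℕ → Set ℕ, Function.Injective f ∧ ∀ n, f n ∈ 𝒜) ∧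
      chi '' 𝒜 ∈ Γ.mem (ℕ → Bool) := by
  rintro ⟨𝒜, ⟨hinf, had, hmax⟩, ⟨f, hf, hf𝒜⟩, h𝒜⟩
  have hblock : ∀ n, (disjointed f n).Infinite := disjointed_infinite (fun n => hinf _ (hf𝒜 n))
    fun m n hmn => had _ (hf𝒜 m) _ (hf𝒜 n) (hf.ne hmn)
  obtain ⟨H, hH, hhom⟩ := hRamsey (bothParitiesHit (blockCode f) 𝒜)
    (fun _ => infinite_of_mem_bothParitiesHit) (chi_image_bothParitiesHit_mem Γ h𝒜)
  have hh : StrictMono (Nat.nth (· ∈ H)) := Nat.nth_strictMono hH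
  have hhH : range (Nat.nth (· ∈ H)) ⊆ H := range_subset_iff.2 (Nat.nth_mem_of_infinite hH)
  rcases hhom with hall | hnone
  · obtain ⟨A, hA, hS, hsec⟩ := exists_mem_infinite_blockCode hblock hmax had hf𝒜 hh
    obtain ⟨x, hxH, hx, hxX⟩ := exists_subset_range_notMem_bothParitiesHit had
      (injective2_blockCode hblock) hh hA hS hsec
    exact hxX (hall x hx (hxH.trans hhH))
  · obtain ⟨x, hxH, hxX⟩ := exists_subset_range_mem_bothParitiesHit hmax
      (injective2_blockCode hblock) hh
    exact hnone x (infinite_of_mem_bothParitiesHit hxX) (hxH.trans hhH) hxX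
end

section
/- Let 𝒜 be a MAD family and let {A_n : n ∈ ℕ} be a sequence of pairwise disjoint distinct members of 𝒜 with A_n(0) < A_{n+1}(0) for all n, where A(k) denotes the k-th element of A in increasing order. Define Φ(x) = {A_{x(2n)}(x(2n+1)) : n ∈ ℕ} for x ∈ [ℕ]^ω, where x(k) is the k-th element of x in increasing order. Then for every x ∈ [ℕ]^ω there exist y ∈ [x]^ω and A ∈ 𝒜 such that Φ(y) ⊆ A. -/
open Set

/-- The `k`-th element of `A ⊆ ℕ` in increasing order. -/
noncomputable def nthElem (A : Set ℕ) (k : ℕ) : ℕ := Nat.nth (· ∈ A) k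

/-- The coding operator `Φ(x) = {A_{x(2n)}(x(2n+1)) : n ∈ ℕ}`. -/
noncomputable def Phi (A : ℕ → Set ℕ) (x : Set ℕ) : Set ℕ :=
  Set.range fun n : ℕ => nthElem (A (nthElem x (2 * n))) (nthElem x (2 * n + 1))

lemma nth_range_of_strictMono (g : ℕ → ℕ) (hg : StrictMono g) (n : ℕ) :
    Nat.nth (· ∈ Set.range g) n = g n := by
  induction n using Nat.strong_induction_on with
  | _ n ih =>
    rw [Nat.nth_eq_sInf]
    apply le_antisymm
    · exact Nat.sInf_le ⟨⟨n, rfl⟩, fun k hk => by rw [ih k hk]; exact hg hk⟩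
    · refine le_csInf ⟨g n, ⟨n, rfl⟩, fun k hk => by rw [ih k hk]; exact hg hk⟩ ?_
      rintro z ⟨⟨m, rfl⟩, hz⟩
      rcases Nat.lt_or_ge m n with hm | hm
      · have := hz m hm
        rw [ih m hm] at this
        exact absurd this (lt_irrefl _)
      · exact hg.monotone hm

theorem phi_hides_into_some_member (𝒜 : Set (Set ℕ)) (h𝒜 : IsMadFamily 𝒜)
    (A : ℕ → Set ℕ) (hAmem : ∀ n, A n ∈ 𝒜) (hAinj : Function.Injective A)
    (hAdisj : ∀ m n, m ≠ n → Disjoint (A m) (A n))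
    (hAord : ∀ n, nthElem (A n) 0 < nthElem (A (n + 1)) 0) :
    ∀ x : Set ℕ, x.Infinite →
      ∃ y : Set ℕ, y.Infinite ∧ y ⊆ x ∧ ∃ B ∈ 𝒜, Phi A y ⊆ B := by
  intro x hx
  have hAinf : ∀ n, (A n).Infinite := fun n => h𝒜.1 _ (hAmem n)
  set e : ℕ → ℕ := fun k => nthElem x k with he
  have hemem : ∀ k, e k ∈ x := fun k => Nat.nth_mem_of_infinite hx k
  have hemono : StrictMono e := Nat.nth_strictMono hx
  set f : ℕ → ℕ := fun n => nthElem (A (e (2 * n))) (e (2 * n + 1)) with hf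
  have hfmem : ∀ n, f n ∈ A (e (2 * n)) := fun n =>
    Nat.nth_mem_of_infinite (hAinf _) _
  have hfinj : Function.Injective f := by
    intro m n hmn
    by_contra hne
    have h1 : e (2 * m) ≠ e (2 * n) := fun h => hne (by
      have := hemono.injective h; omega)
    exact (hAdisj _ _ h1).ne_of_mem (hfmem m) (hfmem n) hmn
  have hrange : (Set.range f).Infinite := Set.infinite_range_of_injective hfinj
  obtain ⟨B, hB𝒜, hBinf⟩ := h𝒜.2.2 _ hrange
  set S : Set ℕ := {n | f n ∈ B} with hS
  have hSinf : S.Infinite := by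
    intro hfin
    apply hBinf
    have hsub : Set.range f ∩ B ⊆ f '' S := by
      rintro z ⟨⟨n, rfl⟩, hzB⟩
      exact ⟨n, hzB, rfl⟩
    exact ((hfin.image f).subset hsub)
  set s : ℕ → ℕ := fun k => Nat.nth (· ∈ S) k with hs
  have hsmem : ∀ k, s k ∈ S := fun k => Nat.nth_mem_of_infinite hSinf k
  have hsmono : StrictMono s := Nat.nth_strictMono hSinf
  set g : ℕ → ℕ := fun j =>
    if j % 2 = 0 then e (2 * s (j / 2)) else e (2 * s (j / 2) + 1) with hg
  have hgeven : ∀ n, g (2 * n) = e (2 * s n) := by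
    intro n
    have h1 : (2 * n) % 2 = 0 ∧ (2 * n) / 2 = n := by omega
    simp [hg, h1.1, h1.2]
  have hgodd : ∀ n, g (2 * n + 1) = e (2 * s n + 1) := by
    intro n
    have h1 : (2 * n + 1) % 2 = 1 ∧ (2 * n + 1) / 2 = n := by omega
    simp [hg, h1.1, h1.2]
  have hgmono : StrictMono g := by
    apply strictMono_nat_of_lt_succ
    intro j
    rcases Nat.even_or_odd j with ⟨k, hk⟩ | ⟨k, hk⟩
    · subst hk
      rw [show k + k = 2 * k by ring, hgeven, hgodd]
      exact hemono (by omega)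
    · subst hk
      rw [show 2 * k + 1 + 1 = 2 * (k + 1) by ring, hgodd, hgeven]
      apply hemono
      have := hsmono (show k < k + 1 by omega)
      omega
  refine ⟨Set.range g, Set.infinite_range_of_injective hgmono.injective, ?_, B, hB𝒜, ?_⟩
  · rintro z ⟨j, rfl⟩
    rcases Nat.even_or_odd j with ⟨k, hk⟩ | ⟨k, hk⟩
    · subst hk; rw [show k + k = 2 * k by ring, hgeven]; exact hemem _
    · subst hk; rw [hgodd]; exact hemem _
  · rintro z ⟨n, rfl⟩
    have h1 : nthElem (Set.range g) (2 * n) = g (2 * n) :=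
      nth_range_of_strictMono g hgmono (2 * n)
    have h2 : nthElem (Set.range g) (2 * n + 1) = g (2 * n + 1) :=
      nth_range_of_strictMono g hgmono (2 * n + 1)
    simp only [h1, h2, hgeven, hgodd]
    exact hsmem n
end

section
/- Let 𝒜 be a MAD family and let {A_n : n ∈ ℕ} be a sequence of pairwise disjoint distinct members of 𝒜 with A_n(0) < A_{n+1}(0) for all n, where A(k) denotes the k-th element of A in increasing order. Define Φ(x) = {A_{x(2n)}(x(2n+1)) : n ∈ ℕ} for x ∈ [ℕ]^ω, where x(k) is the k-th element of x in increasing order. Then for every x ∈ [ℕ]^ω there exist y ∈ [x]^ω and A ∈ 𝒜 such that both A ∩ Φ(y) and Φ(y) ∖ A are infinite. -/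
open Set

/-- `Nat.nth` of the range of a strictly monotone function. -/
lemma nth_range_strictMono {f : ℕ → ℕ} (hf : StrictMono f) (n : ℕ) :
    Nat.nth (· ∈ Set.range f) n = f n := by
  induction n using Nat.strong_induction_on with
  | _ n ih =>
    have hinf : {x | x ∈ Set.range f}.Infinite :=
      Set.infinite_range_of_injective hf.injective
    have hle := Nat.isLeast_nth_of_infinite (p := (· ∈ Set.range f)) hinf n
    refine hle.unique ⟨⟨⟨n, rfl⟩, ?_⟩, ?_⟩
    · intro k hk; rw [ih k hk]; exact hf hk
    · rintro t ⟨⟨m, rfl⟩, ht⟩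
      rcases lt_or_ge m n with h | h
      · exact absurd (ht m h) (by rw [ih m h]; exact lt_irrefl _)
      · exact hf.monotone h

theorem phi_split_by_some_member (𝒜 : Set (Set ℕ)) (h𝒜 : IsMadFamily 𝒜)
    (A : ℕ → Set ℕ) (hAmem : ∀ n, A n ∈ 𝒜) (hAinj : Function.Injective A)
    (hAdisj : ∀ m n, m ≠ n → Disjoint (A m) (A n))
    (hAord : ∀ n, nthElem (A n) 0 < nthElem (A (n + 1)) 0) :
    ∀ x : Set ℕ, x.Infinite →
      ∃ y : Set ℕ, y.Infinite ∧ y ⊆ x ∧ ∃ B ∈ 𝒜, (B ∩ Phi A y).Infinite ∧ (Phi A y \ B).Infinite := by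
  obtain ⟨hInf, hAD, hMad⟩ := h𝒜
  intro x hx
  have hxmem : ∀ k, nthElem x k ∈ x := fun k => Nat.nth_mem_of_infinite hx k
  have hxmono : StrictMono (nthElem x) := Nat.nth_strictMono hx
  set v : ℕ → ℕ := fun n => nthElem (A (nthElem x (2 * n))) (nthElem x (2 * n + 1)) with hv
  have hAn : ∀ (C : Set ℕ) (k : ℕ), C.Infinite → nthElem C k ∈ C := fun C k hC =>
    Nat.nth_mem_of_infinite hC k
  have hvmem : ∀ n, v n ∈ A (nthElem x (2 * n)) := fun n =>
    hAn _ _ (hInf _ (hAmem _))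
  have hvinj : Function.Injective v := by
    intro m n h
    by_contra hne
    have hcol : nthElem x (2 * m) ≠ nthElem x (2 * n) := by
      intro h'
      have := hxmono.injective h'
      omega
    exact Set.disjoint_left.mp (hAdisj _ _ hcol) (hvmem m) (h ▸ hvmem n)
  have hPhix : Phi A x = Set.range v := rfl
  have hPhiInf : (Phi A x).Infinite := by
    rw [hPhix]; exact Set.infinite_range_of_injective hvinj
  obtain ⟨B, hB, hBx⟩ := hMad _ hPhiInf
  -- B intersects each A m finitely
  have hPhiAm : ∀ m, (Phi A x ∩ A m).Finite := by
    intro m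
    have hS : {n | nthElem x (2 * n) = m}.Subsingleton := by
      intro a ha b hb
      have : nthElem x (2 * a) = nthElem x (2 * b) := ha.trans hb.symm
      have := hxmono.injective this; omega
    have hsub : Phi A x ∩ A m ⊆ v '' {n | nthElem x (2 * n) = m} := by
      rintro t ⟨⟨n, rfl⟩, htm⟩
      refine ⟨n, ?_, rfl⟩
      by_contra hne
      exact Set.disjoint_left.mp (hAdisj _ _ hne) (hvmem n) htm
    exact ((hS.finite).image v).subset hsub
  have hBA : ∀ m, (B ∩ A m).Finite := by
    intro m
    rcases eq_or_ne B (A m) with rfl | hne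
    · exact absurd hBx (Set.not_infinite.mpr (hPhiAm m))
    · exact hAD _ hB _ (hAmem m) hne
  -- step lemma
  have step : ∀ (n m : ℕ), ∃ p : ℕ × ℕ, m < p.1 ∧ p.1 < p.2 ∧ p.1 ∈ x ∧ p.2 ∈ x ∧
      (nthElem (A p.1) p.2 ∈ B ↔ Even n) := by
    intro n m
    rcases Nat.even_or_odd n with he | ho
    · -- need value in B
      have hSinf : {k | v k ∈ B}.Infinite := by
        by_contra hfin
        rw [Set.not_infinite] at hfin
        refine absurd hBx (Set.not_infinite.mpr ((hfin.image v).subset ?_))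
        rintro t ⟨⟨k, rfl⟩, htB⟩
        exact ⟨k, htB, rfl⟩
      obtain ⟨k, hkS, hkm⟩ := hSinf.exists_gt m
      refine ⟨(nthElem x (2 * k), nthElem x (2 * k + 1)), ?_, hxmono (by omega), hxmem _, hxmem _, ?_⟩
      · calc m < k := hkm
          _ ≤ 2 * k := by omega
          _ ≤ nthElem x (2 * k) := hxmono.le_apply
      · simpa [he] using hkS
    · -- need value outside B
      obtain ⟨a, hax, ham⟩ := hx.exists_gt m
      have hAa : (A a).Infinite := hInf _ (hAmem a)
      have hT : {k | nthElem (A a) k ∈ B}.Finite := by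
        have hinj : Set.InjOn (nthElem (A a)) {k | nthElem (A a) k ∈ B} :=
          (Nat.nth_injective hAa).injOn
        refine Set.Finite.of_finite_image ?_ hinj
        refine (hBA a).subset ?_
        rintro t ⟨k, hk, rfl⟩
        exact ⟨hk, hAn _ _ hAa⟩
      obtain ⟨b, hbx, hbT⟩ := (hx.diff hT).exists_gt a
      refine ⟨(a, b), ham, hbT, hax, hbx.1, ?_⟩
      have : ¬ Even n := Nat.not_even_iff_odd.symm.mp ho
      simpa [this] using hbx.2
  choose f hf1 hf2 hf3 hf4 hf5 using step
  set P : ℕ → ℕ × ℕ := fun n => Nat.rec (f 0 0) (fun k prev => f (k + 1) prev.2) n with hP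
  have hPsucc : ∀ n, P (n + 1) = f (n + 1) (P n).2 := fun n => rfl
  have hP0 : P 0 = f 0 0 := rfl
  have hPlt : ∀ n, (P n).1 < (P n).2 := by
    intro n; cases n with
    | zero => exact hf2 0 0
    | succ k => rw [hPsucc]; exact hf2 _ _
  have hPx1 : ∀ n, (P n).1 ∈ x := by
    intro n; cases n with
    | zero => exact hf3 0 0
    | succ k => rw [hPsucc]; exact hf3 _ _
  have hPx2 : ∀ n, (P n).2 ∈ x := by
    intro n; cases n with
    | zero => exact hf4 0 0
    | succ k => rw [hPsucc]; exact hf4 _ _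
  have hPB : ∀ n, (nthElem (A (P n).1) (P n).2 ∈ B ↔ Even n) := by
    intro n; cases n with
    | zero => exact hf5 0 0
    | succ k => rw [hPsucc]; exact hf5 _ _
  have hPlink : ∀ n, (P n).2 < (P (n + 1)).1 := by
    intro n; rw [hPsucc]; exact hf1 _ _
  -- the function g
  set g : ℕ → ℕ := fun k => if Even k then (P (k / 2)).1 else (P (k / 2)).2 with hg
  have hgeven : ∀ n, g (2 * n) = (P n).1 := by
    intro n
    have h1 : Even (2 * n) := even_two_mul n
    have h2 : 2 * n / 2 = n := by omega
    simp only [hg, if_pos h1, h2]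
  have hgodd : ∀ n, g (2 * n + 1) = (P n).2 := by
    intro n
    have h1 : ¬ Even (2 * n + 1) := by
      intro h; exact (Nat.even_add_one.mp h) (even_two_mul n)
    have h2 : (2 * n + 1) / 2 = n := by omega
    simp only [hg, if_neg h1, h2]
  have hgmono : StrictMono g := by
    apply strictMono_nat_of_lt_succ
    intro k
    rcases Nat.even_or_odd k with ⟨j, hj⟩ | ⟨j, hj⟩
    · have hk : k = 2 * j := by omega
      rw [hk, hgeven, show 2 * j + 1 = 2 * j + 1 from rfl, hgodd]
      exact hPlt j
    · have hk : k = 2 * j + 1 := by omega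
      rw [hk, hgodd, show 2 * j + 1 + 1 = 2 * (j + 1) from by omega, hgeven]
      exact hPlink j
  have hnth : ∀ k, nthElem (Set.range g) k = g k := fun k => nth_range_strictMono hgmono k
  set w : ℕ → ℕ := fun n => nthElem (A (P n).1) (P n).2 with hwdef
  have hweq : Phi A (Set.range g) = Set.range w := by
    have heq : (fun n : ℕ => nthElem (A (nthElem (Set.range g) (2 * n)))
        (nthElem (Set.range g) (2 * n + 1))) = w := by
      funext n
      rw [hnth, hnth, hgeven, hgodd]
    rw [Phi, heq]
  have hwmem : ∀ n, w n ∈ A (P n).1 := fun n => hAn _ _ (hInf _ (hAmem _))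
  have hwB : ∀ n, (w n ∈ B ↔ Even n) := hPB
  clear_value w g P
  have hc : StrictMono (fun n => (P n).1) :=
    strictMono_nat_of_lt_succ (fun n => (hPlt n).trans (hPlink n))
  have hwinj : Function.Injective w := by
    intro m n h
    by_contra hne
    have hne' : (P m).1 ≠ (P n).1 := fun h' => hne (hc.injective h')
    exact Set.disjoint_left.mp (hAdisj _ _ hne') (hwmem m) (h ▸ hwmem n)
  have hinj1 : Function.Injective (fun n : ℕ => w (2 * n)) := by
    intro a b hab
    have h' : w (2 * a) = w (2 * b) := hab
    have := hwinj h'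
    omega
  have hinj2 : Function.Injective (fun n : ℕ => w (2 * n + 1)) := by
    intro a b hab
    have h' : w (2 * a + 1) = w (2 * b + 1) := hab
    have := hwinj h'
    omega
  refine ⟨Set.range g, Set.infinite_range_of_injective hgmono.injective, ?_, B, hB, ?_, ?_⟩
  · rintro t ⟨k, rfl⟩
    rcases Nat.even_or_odd k with ⟨j, hj⟩ | ⟨j, hj⟩
    · rw [show k = 2 * j from by omega, hgeven]; exact hPx1 j
    · rw [show k = 2 * j + 1 from by omega, hgodd]; exact hPx2 j
  · rw [hweq]
    exact Set.infinite_of_injective_forall_mem (f := fun n : ℕ => w (2 * n))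
      hinj1
      (fun n => ⟨(hwB (2 * n)).mpr (even_two_mul n), ⟨2 * n, rfl⟩⟩)
  · rw [hweq]
    exact Set.infinite_of_injective_forall_mem (f := fun n : ℕ => w (2 * n + 1))
      hinj2
      (fun n => ⟨⟨2 * n + 1, rfl⟩, fun hmem =>
        (Nat.even_add_one.mp ((hwB (2 * n + 1)).mp hmem)) (even_two_mul n)⟩)
end

section
/- Let Γ be a good pointclass. Then every set X ⊆ [ℕ]^ω belonging to Γ has the Ramsey property if and only if every set X ⊆ [ℕ]^ω belonging to Γ is completely Ramsey. -/
open Set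

/-- A set `X ⊆ [ℕ]^ω` is completely Ramsey: for every finite `a ⊆ ℕ` and infinite
`A ⊆ ℕ` with `max a < min A` there is an infinite `H ⊆ A` such that
`[a,H] ⊆ X` or `[a,H] ∩ X = ∅`, where `[a,H] = {B ∈ [ℕ]^ω : a ⊆ B ⊆ a ∪ H}`. -/
def CompletelyRamsey (X : Set (Set ℕ)) : Prop :=
  ∀ (a : Finset ℕ) (A : Set ℕ), A.Infinite → (∀ i ∈ a, ∀ j ∈ A, i < j) →
    ∃ H : Set ℕ, H.Infinite ∧ H ⊆ A ∧
      ((∀ B : Set ℕ, B.Infinite → ↑a ⊆ B → B ⊆ ↑a ∪ H → B ∈ X) ∨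
       (∀ B : Set ℕ, B.Infinite → ↑a ⊆ B → B ⊆ ↑a ∪ H → B ∉ X))

/-!
Completely Ramsey implies Ramsey by taking `a = ∅`, `A = ℕ`. Conversely, if `e` enumerates `A`,
then `B ↦ a ∪ e '' B` maps `[H]^ω` onto `[a, e '' H]`, so a homogeneous `H` for the pullback
`Y = {B ∈ [ℕ]^ω | a ∪ e '' B ∈ X}` yields the homogeneous set `e '' H ⊆ A` for `X` at `[a, A]`.
In characteristic-function coordinates this map is continuous (each output bit is a constant or
a single input bit), so `Y` lies in `Γ` along with `X`.
-/

instance : PolishSpace (ℕ → Bool) where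

section Chi

variable {α : Type}

theorem setOf_chi (s : Set α) : {a | chi s a = true} = s := by
  ext a; simp [chi]

theorem chi_setOf (x : α → Bool) : chi {a | x a = true} = x := by
  funext a; by_cases h : x a = true <;> simp [chi, h]

theorem chi_injective : Function.Injective (chi (α := α)) :=
  Function.LeftInverse.injective (g := fun x : α → Bool => {a | x a = true}) setOf_chi

theorem image_chi_eq_preimage (S : Set (Set α)) :
    chi '' S = (fun x : α → Bool => {a | x a = true}) ⁻¹' S :=
  congrFun (image_eq_preimage_of_inverse (g := fun x : α → Bool => {a | x a = true})
    setOf_chi chi_setOf) S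

theorem image_chi_preimage {β : Type} {f : Set α → Set β} {F : (α → Bool) → β → Bool}
    (hF : ∀ s, chi (f s) = F (chi s)) (X : Set (Set β)) :
    chi '' (f ⁻¹' X) = F ⁻¹' (chi '' X) := by
  ext x
  rw [← chi_setOf x, mem_preimage, ← hF, chi_injective.mem_set_image, chi_injective.mem_set_image,
    mem_preimage]

end Chi

namespace GoodPointclass

theorem inter_mem_s4 (Γ : GoodPointclass) {X : Type} [TopologicalSpace X] [PolishSpace X]
    {s t : Set X} (hs : s ∈ Γ.mem X) (ht : t ∈ Γ.mem X) : s ∩ t ∈ Γ.mem X := by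
  have hst : s ∩ t = ⋂ n : ℕ, if n = 0 then s else t := by
    ext x
    simp only [mem_inter_iff, mem_iInter]
    refine ⟨fun ⟨hxs, hxt⟩ n => ?_, fun h => ⟨by simpa using h 0, by simpa using h 1⟩⟩
    split_ifs <;> assumption
  rw [hst]
  exact Γ.iInter_mem X _ fun n => by split_ifs <;> assumption

theorem image_chi_setOf_infinite_mem (Γ : GoodPointclass) :
    chi '' {s : Set ℕ | s.Infinite} ∈ Γ.mem (ℕ → Bool) := by
  have h : chi '' {s : Set ℕ | s.Infinite} = ⋂ n, ⋃ m, {x : ℕ → Bool | x (n + m + 1) = true} := by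
    ext x
    simp only [image_chi_eq_preimage, mem_preimage, mem_ofPred_eq, mem_iInter, mem_iUnion,
      infinite_iff_exists_gt]
    refine forall_congr' fun n =>
      ⟨fun ⟨m, hm, hnm⟩ => ⟨m - n - 1, ?_⟩, fun ⟨m, hm⟩ => ⟨_, hm, by omega⟩⟩
    rwa [show n + (m - n - 1) + 1 = m by omega]
  rw [h]
  exact Γ.iInter_mem _ _ fun n => Γ.iUnion_mem _ _ fun m => Γ.clopen_mem _ _
    ((isClopen_discrete {true}).preimage (continuous_apply (n + m + 1)))

end GoodPointclass

/-- Enumerating `A` increasingly by `Nat.nth`, this is the bijection `[ℕ]^ω ≃ [a, A]` when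
`max a < min A`. -/
noncomputable def ellentuckMap (a : Finset ℕ) (A : Set ℕ) (B : Set ℕ) : Set ℕ :=
  ↑a ∪ Nat.nth (· ∈ A) '' B

open Classical in
/-- `ellentuckMap` in characteristic-function coordinates: `m ∈ A` is the `Nat.count`-th element
of `A`. -/
noncomputable def ellentuckMapCode (a : Finset ℕ) (A : Set ℕ) (x : ℕ → Bool) : ℕ → Bool :=
  fun m => if m ∈ a then true else if m ∈ A then x (Nat.count (· ∈ A) m) else false

theorem continuous_ellentuckMapCode (a : Finset ℕ) (A : Set ℕ) :
    Continuous (ellentuckMapCode a A) := by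
  classical
  refine continuous_pi fun m => ?_
  unfold ellentuckMapCode
  split_ifs
  exacts [continuous_const, continuous_apply _, continuous_const]

theorem chi_ellentuckMap (a : Finset ℕ) {A : Set ℕ} (hA : A.Infinite) (B : Set ℕ) :
    chi (ellentuckMap a A B) = ellentuckMapCode a A (chi B) := by
  classical
  funext m
  by_cases hma : m ∈ a
  · simp [chi, ellentuckMap, ellentuckMapCode, hma]
  by_cases hmA : m ∈ A
  · have hm : m ∈ Nat.nth (· ∈ A) '' B ↔ Nat.count (· ∈ A) m ∈ B := by
      refine ⟨?_, fun h => ⟨_, h, Nat.nth_count hmA⟩⟩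
      rintro ⟨k, hk, rfl⟩
      rwa [Nat.count_nth_of_infinite (p := (· ∈ A)) hA]
    simp [chi, ellentuckMap, ellentuckMapCode, hma, hmA, hm]
  · have hm : m ∉ Nat.nth (· ∈ A) '' B := by
      rintro ⟨k, -, rfl⟩
      exact hmA (Nat.nth_mem_of_infinite hA k)
    simp [chi, ellentuckMap, ellentuckMapCode, hma, hmA, hm]

theorem exists_ellentuckMap_eq (a : Finset ℕ) {A : Set ℕ} (hA : A.Infinite) {H B : Set ℕ}
    (hB : B.Infinite) (haB : ↑a ⊆ B) (hBH : B ⊆ ↑a ∪ Nat.nth (· ∈ A) '' H) :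
    ∃ D : Set ℕ, D.Infinite ∧ D ⊆ H ∧ ellentuckMap a A D = B := by
  have hinj : Function.Injective (Nat.nth (· ∈ A)) := Nat.nth_injective hA
  have hdiff : B \ ↑a ⊆ Nat.nth (· ∈ A) '' H := fun m hm => (hBH hm.1).resolve_left hm.2
  have himage : Nat.nth (· ∈ A) '' (Nat.nth (· ∈ A) ⁻¹' (B \ ↑a)) = B \ ↑a :=
    image_preimage_eq_of_subset (hdiff.trans (image_subset_range _ _))
  refine ⟨Nat.nth (· ∈ A) ⁻¹' (B \ ↑a), ?_, ?_, ?_⟩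
  · exact Infinite.of_image _ (himage ▸ hB.sdiff a.finite_toSet)
  · exact (preimage_mono hdiff).trans (preimage_image_eq H hinj).subset
  · rw [ellentuckMap, himage, union_sdiff_cancel haB]

theorem completelyRamsey_of_ramseyProp_preimage_ellentuckMap {X : Set (Set ℕ)}
    (hX : ∀ (a : Finset ℕ) (A : Set ℕ), A.Infinite →
      RamseyProp ({B | B.Infinite} ∩ ellentuckMap a A ⁻¹' X)) :
    CompletelyRamsey X := by
  intro a A hA _
  obtain ⟨H, hH, hHX⟩ := hX a A hA
  refine ⟨Nat.nth (· ∈ A) '' H, hH.image (Nat.nth_injective hA).injOn,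
    image_subset_iff.2 fun k _ => Nat.nth_mem_of_infinite hA k, ?_⟩
  refine hHX.imp (fun hin B hB haB hBH => ?_) (fun hout B hB haB hBH hBX => ?_)
  all_goals obtain ⟨D, hD, hDH, rfl⟩ := exists_ellentuckMap_eq a hA hB haB hBH
  · exact (hin D hD hDH).2
  · exact hout D hD hDH ⟨hD, hBX⟩

theorem CompletelyRamsey.ramseyProp {X : Set (Set ℕ)} (hX : CompletelyRamsey X) :
    RamseyProp X := by
  obtain ⟨H, hH, -, hHX⟩ := hX ∅ univ infinite_univ (by simp)
  refine ⟨H, hH, hHX.imp (fun h y hy hyH => ?_) (fun h y hy hyH => ?_)⟩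
  exacts [h y hy (by simp) (by simpa using hyH), h y hy (by simp) (by simpa using hyH)]

theorem ramsey_iff_completelyRamsey_for_good_pointclass (Γ : GoodPointclass) :
    (∀ X : Set (Set ℕ), (∀ x ∈ X, x.Infinite) →
        chi '' X ∈ Γ.mem (ℕ → Bool) → RamseyProp X) ↔
    (∀ X : Set (Set ℕ), (∀ x ∈ X, x.Infinite) →
        chi '' X ∈ Γ.mem (ℕ → Bool) → CompletelyRamsey X) := by
  refine ⟨fun hR X _ hXΓ => ?_, fun hCR X hX hXΓ => (hCR X hX hXΓ).ramseyProp⟩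
  refine completelyRamsey_of_ramseyProp_preimage_ellentuckMap fun a A hA =>
    hR _ (fun _ hB => hB.1) ?_
  rw [image_inter chi_injective, image_chi_preimage (chi_ellentuckMap a hA)]
  exact Γ.inter_mem_s4 Γ.image_chi_setOf_infinite_mem
    (Γ.preimage_mem _ _ _ _ (continuous_ellentuckMapCode a A) hXΓ)
end

section
/- Let Γ be a good pointclass such that every set X ⊆ [ℕ]^ω belonging to Γ has the Ramsey property. Then for every Polish space Y and every Γ-measurable function f : [ℕ]^ω → Y there exists H ∈ [ℕ]^ω such that the restriction of f to [H]^ω is continuous. -/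
open Set

/-- The subset of `ℕ` coded by a point of Cantor space. -/
def toSet (x : ℕ → Bool) : Set ℕ := {n | x n = true}

/-- `[ℕ]^ω` as a subspace of the Cantor space: the codes of infinite subsets of `ℕ`. -/
def InfCantor : Set (ℕ → Bool) := {x | (toSet x).Infinite}

/-!
Fix a countable basis `(U n)` of `Y`. The function `f` is continuous on `[H]^ω` as soon as, for
all `t ∈ H`, `s ⊆ [0, t]` and `n ≤ t`, the family of tails `y` above `t` with `f (s ∪ y) ∈ U n`
is homogeneous on the tails of `H` above `t`: if `x ∈ [H]^ω` has `f x ∈ U n`, take `t ∈ x` beyond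
`n` and `s = x ∩ [0, t]`; the tail of `x` lies in the family, hence so does the tail of every
`z ∈ [H]^ω` agreeing with `x` up to `t`, and then `f z ∈ U n`. Each such family is the preimage
of a Γ-set under a continuous self-map of Cantor space, so the Ramsey property, relativised to
any infinite set by transport along its increasing enumeration, makes it homogeneous on an
infinite subset of any given infinite set. Only finitely many families are attached to each `t`,
so a fusion sequence handles all of them at once.
-/

open Topology TopologicalSpace

theorem polishSpace_iInter_of_isOpen {α : Type*} [TopologicalSpace α] [PolishSpace α]
    {O : ℕ → Set α} (hO : ∀ n, IsOpen (O n)) : PolishSpace ↥(⋂ n, O n) := by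
  have := fun n => (hO n).polishSpace
  let φ : ↥(⋂ n, O n) → ∀ n, ↥(O n) := fun x n => ⟨x, mem_iInter.1 x.2 n⟩
  have hφ : Continuous φ := continuous_pi fun n => continuous_subtype_val.subtype_mk _
  have hrange : range φ = ⋂ n, {p | (p n : α) = p 0} := by
    ext p
    simp only [mem_range, mem_iInter, mem_ofPred_eq]
    refine ⟨by rintro ⟨x, rfl⟩ n; rfl, fun hp => ?_⟩
    exact ⟨⟨p 0, mem_iInter.2 fun n => hp n ▸ (p n).2⟩, funext fun n => Subtype.ext (hp n).symm⟩
  refine (IsClosedEmbedding.mk ?_ ?_).polishSpace (f := φ)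
  · exact .of_comp hφ (continuous_subtype_val.comp (continuous_apply 0)) .subtypeVal
  · rw [hrange]
    exact isClosed_iInter fun n =>
      isClosed_eq (continuous_subtype_val.comp (continuous_apply n))
        (continuous_subtype_val.comp (continuous_apply 0))

-- Instance search does not find this one unaided.
instance inst_s5 : PolishSpace (ℕ → Bool) := {}

theorem infCantor_eq_iInter :
    InfCantor = ⋂ n, ⋃ m ∈ Ioi n, {x : ℕ → Bool | x m = true} := by
  ext x
  simp [InfCantor, toSet, infinite_iff_exists_gt, and_comm]

-- Needed to push Γ-subsets of `[ℕ]^ω` into Cantor space with `GoodPointclass.image_mem`.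
instance : PolishSpace ↥InfCantor := by
  rw [infCantor_eq_iInter]
  exact polishSpace_iInter_of_isOpen fun n =>
    isOpen_biUnion fun m _ =>
      (isOpen_discrete {true}).preimage (continuous_apply (A := fun _ => Bool) m)

theorem chi_toSet (x : ℕ → Bool) : chi (toSet x) = x := by
  funext n
  by_cases h : x n = true <;> simp [chi, toSet, h]

theorem toSet_chi (s : Set ℕ) : toSet (chi s) = s := by
  ext n
  by_cases h : n ∈ s <;> simp [toSet, chi, h]

theorem toSet_injective : Function.Injective toSet :=
  Function.LeftInverse.injective chi_toSet

theorem chi_image_eq_preimage_toSet (Z : Set (Set ℕ)) : chi '' Z = toSet ⁻¹' Z :=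
  congrFun (image_eq_preimage_of_inverse toSet_chi chi_toSet) Z

theorem GoodPointclass.chi_image_preimage_mem (Γ : GoodPointclass) {Z : Set (Set ℕ)}
    (hZ : chi '' Z ∈ Γ.mem (ℕ → Bool)) {g : Set ℕ → Set ℕ} {F : (ℕ → Bool) → ℕ → Bool}
    (hF : Continuous F) (hFg : ∀ x, toSet (F x) = g (toSet x)) :
    chi '' (g ⁻¹' Z) ∈ Γ.mem (ℕ → Bool) := by
  rw [chi_image_eq_preimage_toSet] at hZ ⊢
  have : toSet ⁻¹' (g ⁻¹' Z) = F ⁻¹' (toSet ⁻¹' Z) := by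
    ext x
    simp [hFg]
  rw [this]
  exact Γ.preimage_mem _ _ F _ hF hZ

def Homogeneous (Z : Set (Set ℕ)) (B : Set ℕ) : Prop :=
  (∀ y : Set ℕ, y.Infinite → y ⊆ B → y ∈ Z) ∨ (∀ y : Set ℕ, y.Infinite → y ⊆ B → y ∉ Z)

theorem Homogeneous.mono {Z : Set (Set ℕ)} {B B' : Set ℕ} (h : Homogeneous Z B) (hB : B' ⊆ B) :
    Homogeneous Z B' :=
  h.imp (fun h y hy hyB => h y hy (hyB.trans hB)) (fun h y hy hyB => h y hy (hyB.trans hB))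

theorem Homogeneous.image_of_injective {Z : Set (Set ℕ)} {H : Set ℕ} {e : ℕ → ℕ}
    (he : Function.Injective e) (h : Homogeneous (image e ⁻¹' Z) H) : Homogeneous Z (e '' H) := by
  have lift : ∀ y : Set ℕ, y.Infinite → y ⊆ e '' H →
      (e ⁻¹' y).Infinite ∧ e ⁻¹' y ⊆ H ∧ e '' (e ⁻¹' y) = y := fun y hy hyH =>
    have hyr : y ⊆ range e := hyH.trans (image_subset_range e H)
    ⟨hy.preimage hyr, (preimage_mono hyH).trans (preimage_image_eq H he).subset,
      image_preimage_eq_of_subset hyr⟩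
  refine h.imp (fun h y hy hyH => ?_) (fun h y hy hyH => ?_)
  · obtain ⟨hy', hyH', hey⟩ := lift y hy hyH
    simpa [hey] using h _ hy' hyH'
  · obtain ⟨hy', hyH', hey⟩ := lift y hy hyH
    simpa [hey] using h _ hy' hyH'

theorem exists_subset_homogeneous (Γ : GoodPointclass)
    (hRamsey : ∀ X : Set (Set ℕ), (∀ x ∈ X, x.Infinite) →
      chi '' X ∈ Γ.mem (ℕ → Bool) → RamseyProp X)
    {Z : Set (Set ℕ)} (hZ : ∀ y ∈ Z, y.Infinite) (hZΓ : chi '' Z ∈ Γ.mem (ℕ → Bool))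
    {A : Set ℕ} (hA : A.Infinite) : ∃ B ⊆ A, B.Infinite ∧ Homogeneous Z B := by
  classical
  set e : ℕ → ℕ := Nat.nth (· ∈ A)
  have he : Function.Injective e := Nat.nth_injective hA
  have hΓ : chi '' (image e ⁻¹' Z) ∈ Γ.mem (ℕ → Bool) := by
    refine Γ.chi_image_preimage_mem hZΓ
      (F := fun x m => decide (m ∈ A) && x (Nat.count (· ∈ A) m))
      (continuous_pi fun m => by fun_prop)
      fun x => ?_
    ext m
    simp only [toSet, mem_ofPred_eq, mem_image, Bool.and_eq_true, decide_eq_true_eq]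
    constructor
    · rintro ⟨hmA, hm⟩
      exact ⟨_, hm, Nat.nth_count hmA⟩
    · rintro ⟨n, hn, rfl⟩
      exact ⟨Nat.nth_mem_of_infinite hA n, by rwa [Nat.count_nth_of_infinite (p := (· ∈ A)) hA]⟩
  obtain ⟨H, hH, hHZ⟩ := hRamsey _ (fun y hy => (hZ (e '' y) hy).of_image e) hΓ
  exact ⟨e '' H, image_subset_iff.2 fun n _ => Nat.nth_mem_of_infinite hA n,
    hH.image he.injOn, Homogeneous.image_of_injective he hHZ⟩

theorem exists_subset_forall_mem_finset {ι : Type*} {P : ι → Set ℕ → Prop}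
    (hmono : ∀ i ⦃B B' : Set ℕ⦄, B' ⊆ B → P i B → P i B')
    (hdense : ∀ i A, A.Infinite → ∃ B ⊆ A, B.Infinite ∧ P i B)
    (I : Finset ι) {A : Set ℕ} (hA : A.Infinite) : ∃ B ⊆ A, B.Infinite ∧ ∀ i ∈ I, P i B := by
  induction I using Finset.cons_induction with
  | empty => exact ⟨A, subset_rfl, hA, by simp⟩
  | cons i I _ ih =>
    obtain ⟨B, hBA, hB, hBP⟩ := ih
    obtain ⟨C, hCB, hC, hCP⟩ := hdense i B hB
    refine ⟨C, hCB.trans hBA, hC, ?_⟩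
    simp only [Finset.mem_cons, forall_eq_or_imp]
    exact ⟨hCP, fun j hj => hmono j hCB (hBP j hj)⟩

/-- Fusion: `H = {b₀ < b₁ < ⋯}` with `bₖ = min Aₖ` for infinite sets `A₀ ⊇ A₁ ⊇ ⋯`, where
`Aₖ₊₁` lies above `bₖ` and satisfies `P bₖ`. -/
theorem exists_infinite_forall_diff_Iic {P : ℕ → Set ℕ → Prop}
    (hmono : ∀ t ⦃B B' : Set ℕ⦄, B' ⊆ B → P t B → P t B')
    (hdense : ∀ t A, A.Infinite → ∃ B ⊆ A, B.Infinite ∧ P t B) :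
    ∃ H : Set ℕ, H.Infinite ∧ ∀ t ∈ H, P t (H \ Iic t) := by
  have step : ∀ t A, A.Infinite → ∃ B ⊆ A \ Iic t, B.Infinite ∧ P t B :=
    fun t A hA => hdense t _ (hA.sdiff (finite_Iic t))
  choose! next hnext_sub hnext_inf hnext_P using step
  let A : ℕ → Set ℕ := fun k => Nat.rec univ (fun _ A => next (sInf A) A) k
  have hA : ∀ k, (A k).Infinite := fun k => Nat.rec infinite_univ (fun k ih => hnext_inf _ _ ih) k
  have hbA : ∀ k, sInf (A k) ∈ A k := fun k => Nat.sInf_mem (hA k).nonempty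
  have hsucc : ∀ k, A (k + 1) ⊆ A k \ Iic (sInf (A k)) := fun k => hnext_sub _ _ (hA k)
  have hanti : Antitone A := antitone_nat_of_succ_le fun k => (hsucc k).trans sdiff_subset
  have hb : StrictMono fun k => sInf (A k) := strictMono_nat_of_lt_succ fun k =>
    not_le.1 (hsucc k (hbA (k + 1))).2
  refine ⟨range fun k => sInf (A k), infinite_range_of_injective hb.injective, ?_⟩
  rintro _ ⟨k, rfl⟩
  refine hmono _ ?_ (hnext_P _ _ (hA k))
  rintro _ ⟨⟨m, rfl⟩, hkm⟩
  exact hanti (hb.lt_iff_lt.1 (not_le.1 hkm)) (hbA m)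

def glue (s : Finset ℕ) (t : ℕ) (y : Set ℕ) : Set ℕ := ↑s ∪ (y \ Iic t)

theorem Set.Infinite.of_glue {s : Finset ℕ} {t : ℕ} {y : Set ℕ} (h : (glue s t y).Infinite) :
    y.Infinite :=
  (infinite_union.1 h).resolve_left s.finite_toSet.not_infinite |>.mono sdiff_subset

theorem glue_toSet_diff_Iic {x z : ℕ → Bool} {t : ℕ} (h : ∀ i ≤ t, z i = x i) :
    glue ((Finset.range (t + 1)).filter fun m => x m = true) t (toSet z \ Iic t) = toSet z := by
  ext m
  by_cases hm : m ≤ t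
  · simp [glue, toSet, hm, h m hm]
  · simp [glue, toSet, hm]

theorem GoodPointclass.chi_image_preimage_glue_mem (Γ : GoodPointclass) {Z : Set (Set ℕ)}
    (hZ : chi '' Z ∈ Γ.mem (ℕ → Bool)) (s : Finset ℕ) (t : ℕ) :
    chi '' (glue s t ⁻¹' Z) ∈ Γ.mem (ℕ → Bool) := by
  refine Γ.chi_image_preimage_mem hZ (F := fun x m => decide (m ∈ s) || (decide (t < m) && x m))
    (continuous_pi fun m => by fun_prop) fun x => ?_
  ext m
  simp [glue, toSet, and_comm]

def setsMappedInto {Y : Type} (f : ↥InfCantor → Y) (V : Set Y) : Set (Set ℕ) :=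
  (fun z : ↥InfCantor => toSet z) '' (f ⁻¹' V)

section setsMappedInto

variable {Y : Type} {f : ↥InfCantor → Y} {V : Set Y}

theorem toSet_mem_setsMappedInto {z : ↥InfCantor} : toSet z ∈ setsMappedInto f V ↔ f z ∈ V := by
  refine ⟨?_, fun hz => ⟨z, hz, rfl⟩⟩
  rintro ⟨w, hw, hwz⟩
  have : w = z := Subtype.ext (toSet_injective hwz)
  exact this ▸ hw

theorem infinite_of_mem_setsMappedInto {y : Set ℕ} (hy : y ∈ setsMappedInto f V) :
    y.Infinite := by
  obtain ⟨z, -, rfl⟩ := hy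
  exact z.2

theorem GoodPointclass.chi_image_setsMappedInto_mem (Γ : GoodPointclass)
    (hV : f ⁻¹' V ∈ Γ.mem ↥InfCantor) : chi '' setsMappedInto f V ∈ Γ.mem (ℕ → Bool) := by
  rw [setsMappedInto, image_image]
  simp only [chi_toSet]
  exact Γ.image_mem _ _ Subtype.val _ continuous_subtype_val hV

end setsMappedInto

def gluingData (t : ℕ) : Finset (Finset ℕ × ℕ) :=
  (Finset.range (t + 1)).powerset ×ˢ Finset.range (t + 1)

theorem continuousOn_of_homogeneous_tails {Y : Type} [TopologicalSpace Y] {f : ↥InfCantor → Y}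
    {U : ℕ → Set Y} (hU : IsTopologicalBasis (range U)) {H : Set ℕ}
    (hH : ∀ t ∈ H, ∀ c ∈ gluingData t,
      Homogeneous (glue c.1 t ⁻¹' setsMappedInto f (U c.2)) (H \ Iic t)) :
    ContinuousOn f {x | toSet ↑x ⊆ H} := by
  rw [continuousOn_iff]
  intro x hxH W hW hfxW
  obtain ⟨_, ⟨n, rfl⟩, hfxU, hUW⟩ := hU.exists_subset_of_mem_open hfxW hW
  obtain ⟨t, htx, hnt⟩ := (x.2 : (toSet ↑x).Infinite).exists_gt n
  set s := (Finset.range (t + 1)).filter fun m => x.1 m = true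
  have hhom := hH t (hxH htx) (s, n) <| by
    simp only [gluingData, Finset.mem_product, Finset.mem_powerset, Finset.mem_range]
    exact ⟨Finset.filter_subset _ _, by omega⟩
  have hx : toSet ↑x \ Iic t ∈ glue s t ⁻¹' setsMappedInto f (U n) := by
    rw [mem_preimage, glue_toSet_diff_Iic fun _ _ => rfl]
    exact toSet_mem_setsMappedInto.2 hfxU
  have hpos := hhom.resolve_right fun hneg =>
    hneg _ (x.2.sdiff (finite_Iic t)) (sdiff_subset_sdiff_left hxH) hx
  refine ⟨Subtype.val ⁻¹' (Iic t).pi fun i => {x.1 i},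
    (isOpen_set_pi (finite_Iic t) fun i _ => isOpen_discrete _).preimage continuous_subtype_val,
    fun i _ => rfl, ?_⟩
  rintro z ⟨hzx, hzH⟩
  have hz := hpos _ (z.2.sdiff (finite_Iic t)) (sdiff_subset_sdiff_left hzH)
  rw [mem_preimage, glue_toSet_diff_Iic hzx] at hz
  exact hUW (toSet_mem_setsMappedInto.1 hz)

theorem gamma_measurable_restricts_to_continuous (Γ : GoodPointclass)
    (hRamsey : ∀ X : Set (Set ℕ), (∀ x ∈ X, x.Infinite) →
      chi '' X ∈ Γ.mem (ℕ → Bool) → RamseyProp X)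
    (Y : Type) [TopologicalSpace Y] [PolishSpace Y] (f : ↥InfCantor → Y)
    (hf : ∀ U : Set Y, IsOpen U → f ⁻¹' U ∈ Γ.mem ↥InfCantor) :
    ∃ H : Set ℕ, H.Infinite ∧
      ContinuousOn f {x : ↥InfCantor | toSet ↑x ⊆ H} := by
  obtain ⟨U, hU⟩ := exists_seq_basis Y
  let Z (t : ℕ) (c : Finset ℕ × ℕ) : Set (Set ℕ) := glue c.1 t ⁻¹' setsMappedInto f (U c.2)
  have hZ (t c) : ∀ y ∈ Z t c, y.Infinite := fun _ hy =>
    (infinite_of_mem_setsMappedInto hy).of_glue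
  have hZΓ (t c) : chi '' Z t c ∈ Γ.mem (ℕ → Bool) := Γ.chi_image_preimage_glue_mem
    (Γ.chi_image_setsMappedInto_mem (hf _ (hU.isOpen ⟨c.2, rfl⟩))) _ _
  obtain ⟨H, hH, hHZ⟩ := exists_infinite_forall_diff_Iic
    (P := fun t B => ∀ c ∈ gluingData t, Homogeneous (Z t c) B)
    (fun t _ _ hB hP c hc => (hP c hc).mono hB)
    (fun t _ hA => exists_subset_forall_mem_finset (fun _ _ _ hB hP => hP.mono hB)
      (fun c _ hA => exists_subset_homogeneous Γ hRamsey (hZ t c) (hZΓ t c) hA) _ hA)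
  exact ⟨H, hH, continuousOn_of_homogeneous_tails hU hHZ⟩
end
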